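/- arXiv:1304.4095 — 3 statements merged into one kernel-verified Lean document; each statement's English description precedes it below -/
import Mathlib

section
/- Let s ≥ 1 be an integer, let u₁,…,u_s ∈ T, ω₁,…,ω_{s+1} ∈ A, μ₁,…,μ_s ∈ A and η ∈ B, and suppose: (1) γ(uᵢ,ωⱼ) = 0 for all 1 ≤ i ≤ s and 1 ≤ j ≤ s+1; (2) there are scalars λᵢⱼ ∈ ℂ with γ(uᵢ,μⱼ) = λᵢⱼ·η for all 1 ≤ i,j ≤ s, and the s×s matrix (λᵢⱼ) is invertible. Then (c ⊗ id ⊗ id)(u₁∧…∧u_s ⊗ ω₁∧…∧ω_{s+1} ⊗ η) lies in the subspace T ⊗ Im(Φ_{s,s+2,0}) of T ⊗ ⋀^{s−1}T ⊗ ⋀^{s+1}A ⊗ B, where Φ_{s,s+2,0} : ⋀^{s}T ⊗ ⋀^{s+2}A → ⋀^{s−1}T ⊗ ⋀^{s+1}A ⊗ B. -/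
/-! Put `gᵢ = u₁∧…∧ûᵢ∧…∧u_s ⊗ ω₁∧…∧ω_{s+1} ⊗ η`. As `γ(uᵢ,ωⱼ) = 0`, applying `Φ` to
`u₁∧…∧u_s ⊗ ω₁∧…∧ω_{s+1}∧μ_k` only contracts against `μ_k` and yields `Σᵢ ±λᵢₖ gᵢ`.
Inverting `(λᵢⱼ)` puts every `gᵢ` in `Im Φ`, and
`(c ⊗ id ⊗ id)(u₁∧…∧u_s ⊗ ω₁∧…∧ω_{s+1} ⊗ η) = Σᵢ ±uᵢ ⊗ gᵢ`. -/

open ExteriorAlgebra TensorProduct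

/-- The decomposable element `v₁ ∧ … ∧ vₙ` of the `n`-th exterior power. -/
noncomputable def wdg {M : Type*} [AddCommGroup M] [Module ℂ M] (n : ℕ) (v : Fin n → M) :
    ⋀[ℂ]^n M :=
  ⟨ExteriorAlgebra.ιMulti ℂ n v, ExteriorAlgebra.ιMulti_range ℂ n (Set.mem_range_self v)⟩

theorem Submodule.mem_of_forall_sum_smul_mem {R M n : Type*} [CommRing R] [AddCommGroup M]
    [Module R M] [Fintype n] [DecidableEq n] (S : Submodule R M) {lam : Matrix n n R}
    (hlam : IsUnit lam.det) {g : n → M} (h : ∀ k, ∑ i, lam i k • g i ∈ S) (j : n) :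
    g j ∈ S := by
  have hg : g j = ∑ k, lam⁻¹ k j • ∑ i, lam i k • g i := by
    simp only [Finset.smul_sum, smul_smul]
    rw [Finset.sum_comm]
    simp only [← Finset.sum_smul, mul_comm (lam⁻¹ _ j), ← Matrix.mul_apply,
      Matrix.mul_nonsing_inv lam hlam, Matrix.one_apply, ite_smul, one_smul, zero_smul,
      Finset.sum_ite_eq', Finset.mem_univ, if_true]
  rw [hg]
  exact S.sum_mem fun k _ => S.smul_mem _ (h k)

theorem TensorProduct.assoc_rTensor_tmul_mem_range_lTensor {R V T E W ι : Type*} [CommRing R]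
    [AddCommGroup V] [Module R V] [AddCommGroup T] [Module R T] [AddCommGroup E] [Module R E]
    [AddCommGroup W] [Module R W] [Fintype ι] (c : V →ₗ[R] T ⊗[R] E) {v : V} {r : ι → R}
    {t : ι → T} {e : ι → E} (hc : c v = ∑ i, r i • (t i ⊗ₜ[R] e i))
    (S : Submodule R (E ⊗[R] W)) {x : W} (hS : ∀ i, e i ⊗ₜ[R] x ∈ S) :
    TensorProduct.assoc R T E W (c.rTensor W (v ⊗ₜ[R] x)) ∈
      LinearMap.range (S.subtype.lTensor T) := by
  rw [LinearMap.rTensor_tmul, hc, sum_tmul, map_sum]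
  refine Submodule.sum_mem _ fun i _ => ?_
  rw [← smul_tmul', map_smul, assoc_tmul]
  exact Submodule.smul_mem _ _ ⟨t i ⊗ₜ[R] ⟨_, hS i⟩, LinearMap.lTensor_tmul _ _ _ _⟩

theorem apply_wdg_tmul_wdg_snoc_eq_sum {T A B : Type*} [AddCommGroup T] [Module ℂ T]
    [AddCommGroup A] [Module ℂ A] [AddCommGroup B] [Module ℂ B]
    (γ : T →ₗ[ℂ] A →ₗ[ℂ] B) {m : ℕ} {u : Fin (m+1) → T} {ω : Fin (m+2) → A}
    (h1 : ∀ (i : Fin (m+1)) (j : Fin (m+2)), γ (u i) (ω j) = 0)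
    {Φ : (⋀[ℂ]^(m+1) T) ⊗[ℂ] (⋀[ℂ]^(m+3) A) →ₗ[ℂ]
        (⋀[ℂ]^m T) ⊗[ℂ] ((⋀[ℂ]^(m+2) A) ⊗[ℂ] B)}
    (hΦ : ∀ (u' : Fin (m+1) → T) (ω' : Fin (m+3) → A),
      Φ (wdg (m+1) u' ⊗ₜ[ℂ] wdg (m+3) ω') =
        ∑ i : Fin (m+1), ∑ j : Fin (m+3),
          ((-1 : ℂ)^(i.val + j.val)) •
            (wdg m (i.removeNth u') ⊗ₜ[ℂ]
              (wdg (m+2) (j.removeNth ω') ⊗ₜ[ℂ] γ (u' i) (ω' j))))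
    (x : A) :
    Φ (wdg (m+1) u ⊗ₜ[ℂ] wdg (m+3) (Fin.snoc ω x)) =
      ∑ i : Fin (m+1), ((-1 : ℂ)^(i.val + m)) •
        (wdg m (i.removeNth u) ⊗ₜ[ℂ] (wdg (m+2) ω ⊗ₜ[ℂ] γ (u i) x)) := by
  rw [hΦ]
  refine Finset.sum_congr rfl fun i _ => ?_
  simp only [Fin.sum_univ_castSucc, Fin.snoc_castSucc, h1, tmul_zero, smul_zero,
    Finset.sum_const_zero, zero_add, Fin.removeNth_last, Fin.init_snoc, Fin.snoc_last,
    Fin.val_last]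
  rw [← add_assoc, pow_add, neg_one_sq, mul_one]

theorem stmt3_general {T A B : Type*} [AddCommGroup T] [Module ℂ T]
    [AddCommGroup A] [Module ℂ A]
    [AddCommGroup B] [Module ℂ B]
    (γ : T →ₗ[ℂ] A →ₗ[ℂ] B) (m : ℕ)
    (u : Fin (m+1) → T) (ω : Fin (m+2) → A) (μ : Fin (m+1) → A) (η : B)
    (h1 : ∀ (i : Fin (m+1)) (j : Fin (m+2)), γ (u i) (ω j) = 0)
    (lam : Matrix (Fin (m+1)) (Fin (m+1)) ℂ)
    (h2 : ∀ i j : Fin (m+1), γ (u i) (μ j) = lam i j • η)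
    (hinv : IsUnit lam.det)
    -- `Φ = Φ_{s,s+2,0}` (with `⋀^0 B = ℂ` and `b ∧ 1 = b`), characterized by its values on
    -- decomposable elements:
    (Φ : (⋀[ℂ]^(m+1) T) ⊗[ℂ] (⋀[ℂ]^(m+3) A) →ₗ[ℂ]
        (⋀[ℂ]^m T) ⊗[ℂ] ((⋀[ℂ]^(m+2) A) ⊗[ℂ] B))
    (hΦ : ∀ (u' : Fin (m+1) → T) (ω' : Fin (m+3) → A),
      Φ (wdg (m+1) u' ⊗ₜ[ℂ] wdg (m+3) ω') =
        ∑ i : Fin (m+1), ∑ j : Fin (m+3),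
          ((-1 : ℂ)^(i.val + j.val)) •
            (wdg m (i.removeNth u') ⊗ₜ[ℂ]
              (wdg (m+2) (j.removeNth ω') ⊗ₜ[ℂ] γ (u' i) (ω' j))))
    -- `c : ⋀^s T → T ⊗ ⋀^{s−1} T`, characterized by its values on decomposable elements:
    (c : ⋀[ℂ]^(m+1) T →ₗ[ℂ] T ⊗[ℂ] (⋀[ℂ]^m T))
    (hc : ∀ u' : Fin (m+1) → T,
      c (wdg (m+1) u') =
        ∑ i : Fin (m+1), ((-1 : ℂ)^(i.val)) • (u' i ⊗ₜ[ℂ] wdg m (i.removeNth u'))) :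
    (TensorProduct.assoc ℂ T (⋀[ℂ]^m T) ((⋀[ℂ]^(m+2) A) ⊗[ℂ] B))
        ((LinearMap.rTensor ((⋀[ℂ]^(m+2) A) ⊗[ℂ] B) c)
          (wdg (m+1) u ⊗ₜ[ℂ] (wdg (m+2) ω ⊗ₜ[ℂ] η)))
      ∈ LinearMap.range (LinearMap.lTensor T (LinearMap.range Φ).subtype) := by
  have hΦμ (k : Fin (m+1)) : ∑ i, lam i k • ((-1 : ℂ)^(i.val + m) •
      wdg m (i.removeNth u) ⊗ₜ[ℂ] (wdg (m+2) ω ⊗ₜ[ℂ] η)) ∈ LinearMap.range Φ := by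
    refine ⟨_, (apply_wdg_tmul_wdg_snoc_eq_sum γ h1 hΦ (μ k)).trans ?_⟩
    simp only [h2, tmul_smul, smul_comm (lam _ k)]
  have hg (i : Fin (m+1)) :
      wdg m (i.removeNth u) ⊗ₜ[ℂ] (wdg (m+2) ω ⊗ₜ[ℂ] η) ∈ LinearMap.range Φ := by
    have hsigned := (LinearMap.range Φ).mem_of_forall_sum_smul_mem hinv
      (g := fun i => (-1 : ℂ)^(i.val + m) • wdg m (i.removeNth u) ⊗ₜ[ℂ] (wdg (m+2) ω ⊗ₜ[ℂ] η))
      hΦμ i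
    exact (Submodule.smul_mem_iff _ (pow_ne_zero _ (neg_ne_zero.mpr one_ne_zero))).mp hsigned
  exact TensorProduct.assoc_rTensor_tmul_mem_range_lTensor c (hc u) _
    (x := wdg (m+2) ω ⊗ₜ[ℂ] η) hg

/-- Voisin, Lemma 2.1: given `u₁,…,u_s ∈ T`, `ω₁,…,ω_{s+1} ∈ A`, `μ₁,…,μ_s ∈ A`, `η ∈ B`
(with `s = m+1 ≥ 1`) such that `γ(uᵢ,ωⱼ) = 0` for all `i,j` and `γ(uᵢ,μⱼ) = λᵢⱼ·η` with
`(λᵢⱼ)` invertible, the element `(c ⊗ id ⊗ id)(u₁∧…∧u_s ⊗ ω₁∧…∧ω_{s+1} ⊗ η)` lies in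
`T ⊗ Im(Φ_{s,s+2,0})`.  Here `Φ = Φ_{s,s+2,0}` and `c` are the unique linear maps with the
indicated values on decomposable elements. -/
theorem stmt3 {T A B : Type*} [AddCommGroup T] [Module ℂ T] [FiniteDimensional ℂ T]
    [AddCommGroup A] [Module ℂ A] [FiniteDimensional ℂ A]
    [AddCommGroup B] [Module ℂ B] [FiniteDimensional ℂ B]
    (γ : T →ₗ[ℂ] A →ₗ[ℂ] B) (m : ℕ)
    (u : Fin (m+1) → T) (ω : Fin (m+2) → A) (μ : Fin (m+1) → A) (η : B)
    (h1 : ∀ (i : Fin (m+1)) (j : Fin (m+2)), γ (u i) (ω j) = 0)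
    (lam : Matrix (Fin (m+1)) (Fin (m+1)) ℂ)
    (h2 : ∀ i j : Fin (m+1), γ (u i) (μ j) = lam i j • η)
    (hinv : IsUnit lam.det)
    -- `Φ = Φ_{s,s+2,0}` (with `⋀^0 B = ℂ` and `b ∧ 1 = b`), characterized by its values on
    -- decomposable elements:
    (Φ : (⋀[ℂ]^(m+1) T) ⊗[ℂ] (⋀[ℂ]^(m+3) A) →ₗ[ℂ]
        (⋀[ℂ]^m T) ⊗[ℂ] ((⋀[ℂ]^(m+2) A) ⊗[ℂ] B))
    (hΦ : ∀ (u' : Fin (m+1) → T) (ω' : Fin (m+3) → A),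
      Φ (wdg (m+1) u' ⊗ₜ[ℂ] wdg (m+3) ω') =
        ∑ i : Fin (m+1), ∑ j : Fin (m+3),
          ((-1 : ℂ)^(i.val + j.val)) •
            (wdg m (i.removeNth u') ⊗ₜ[ℂ]
              (wdg (m+2) (j.removeNth ω') ⊗ₜ[ℂ] γ (u' i) (ω' j))))
    -- `c : ⋀^s T → T ⊗ ⋀^{s−1} T`, characterized by its values on decomposable elements:
    (c : ⋀[ℂ]^(m+1) T →ₗ[ℂ] T ⊗[ℂ] (⋀[ℂ]^m T))
    (hc : ∀ u' : Fin (m+1) → T,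
      c (wdg (m+1) u') =
        ∑ i : Fin (m+1), ((-1 : ℂ)^(i.val)) • (u' i ⊗ₜ[ℂ] wdg m (i.removeNth u'))) :
    (TensorProduct.assoc ℂ T (⋀[ℂ]^m T) ((⋀[ℂ]^(m+2) A) ⊗[ℂ] B))
        ((LinearMap.rTensor ((⋀[ℂ]^(m+2) A) ⊗[ℂ] B) c)
          (wdg (m+1) u ⊗ₜ[ℂ] (wdg (m+2) ω ⊗ₜ[ℂ] η)))
      ∈ LinearMap.range (LinearMap.lTensor T (LinearMap.range Φ).subtype) :=
  stmt3_general γ m u ω μ η h1 lam h2 hinv Φ hΦ c hc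
end

section
/- Let f ∈ ℂ[X₀,X₁] be homogeneous of degree d ≥ 2 and squarefree. Then every homogeneous polynomial of degree ≥ 2d−3 in ℂ[X₀,X₁] lies in the Jacobian ideal J_f; equivalently, R_f^k = 0 for every k ≥ 2d−3. -/
/-!
Dehomogenize at `X₁ = 1`. With `F = f(x, 1)`, Euler's identity sends `∂₀f, ∂₁f` to `F'` and
`dF - xF'`. Squarefreeness of `f` passes to `F`, so `F` is separable and `F'`, `dF - xF'` are
coprime; it also rules out `X₁² ∣ f`, which makes one of the two have degree exactly `d - 1`.
Reducing a Bézout identity modulo that one writes every `C` of degree `≤ k` as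
`U F' + V (dF - xF')` with `deg U, deg V ≤ k - d + 1` as soon as `k ≥ 2d - 3`, and homogenizing
`U, V` in degree `k - d + 1` gives `P = u ∂₀f + v ∂₁f`.
-/

open MvPolynomial

noncomputable def jacIdeal (f : MvPolynomial (Fin 2) ℂ) : Ideal (MvPolynomial (Fin 2) ℂ) :=
  Ideal.span {pderiv 0 f, pderiv 1 f}

open Polynomial

theorem Polynomial.coeff_X_mul_derivative {R : Type*} [CommSemiring R] (F : R[X]) (j : ℕ) :
    (X * derivative F).coeff j = j * F.coeff j := by
  cases j with
  | zero => simp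
  | succ j => simp [coeff_X_mul, coeff_derivative, mul_comm]

theorem Polynomial.coeff_derivative_ne_zero_or {K : Type*} [Field K] [CharZero K] {F : K[X]}
    {n : ℕ} (hn : n ≠ 0) (hF : F.coeff n ≠ 0 ∨ F.coeff (n - 1) ≠ 0) :
    (derivative F).coeff (n - 1) ≠ 0 ∨
      ((n : K[X]) * F - X * derivative F).coeff (n - 1) ≠ 0 := by
  have hn1 : 1 ≤ n := Nat.one_le_iff_ne_zero.mpr hn
  have hA : (derivative F).coeff (n - 1) = F.coeff n * n := by
    rw [coeff_derivative, Nat.sub_add_cancel hn1]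
    push_cast [Nat.cast_sub hn1]
    ring
  have hB : ((n : K[X]) * F - X * derivative F).coeff (n - 1) = F.coeff (n - 1) := by
    rw [coeff_sub, coeff_X_mul_derivative, ← C_eq_natCast, coeff_C_mul]
    push_cast [Nat.cast_sub hn1]
    ring
  rw [hA, hB]
  exact hF.imp_left fun h => mul_ne_zero h (Nat.cast_ne_zero.mpr hn)

theorem Polynomial.isCoprime_derivative_natCast_mul_sub_X_mul_derivative {K : Type*} [Field K]
    [CharZero K] {F : K[X]} (hF : Squarefree F) {n : ℕ} (hn : n ≠ 0) :
    IsCoprime (derivative F) ((n : K[X]) * F - X * derivative F) := by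
  have hsep : IsCoprime (derivative F) F := (PerfectField.separable_iff_squarefree.mpr hF).symm
  have hunit : IsUnit (n : K[X]) := by
    rw [← C_eq_natCast]
    exact isUnit_C.mpr (Nat.cast_ne_zero.mpr hn).isUnit
  have := ((isCoprime_mul_unit_left_right hunit _ _).mpr hsep).add_mul_left_right (-X)
  rwa [mul_neg, ← sub_eq_add_neg, mul_comm (derivative F)] at this

theorem Polynomial.exists_mul_add_mul_eq_of_isCoprime {K : Type*} [Field K] {A B C : K[X]}
    {m k : ℕ} (hAB : IsCoprime A B) (hA : A.natDegree ≤ m) (hB : B.natDegree ≤ m)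
    (htop : A.coeff m ≠ 0 ∨ B.coeff m ≠ 0) (hk : 2 * m - 1 ≤ k) (hC : C.natDegree ≤ k) :
    ∃ U V : K[X], U.natDegree ≤ k - m ∧ V.natDegree ≤ k - m ∧ U * A + V * B = C := by
  wlog hBm : B.coeff m ≠ 0 generalizing A B
  · obtain ⟨U, V, hU, hV, h⟩ := this hAB.symm hB hA htop.symm (htop.resolve_right hBm)
    exact ⟨V, U, hV, hU, by rw [← h, add_comm]⟩
  have hBdeg : B.natDegree = m := le_antisymm hB (le_natDegree_of_ne_zero hBm)
  have hB0 : B ≠ 0 := fun h => hBm (by simp [h])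
  obtain ⟨U₀, V₀, hUV⟩ := hAB
  set U := C * U₀ % B
  set V := C * V₀ + C * U₀ / B * A
  have hU : U.natDegree ≤ m - 1 := by
    rcases eq_or_ne U 0 with hU0 | hU0
    · simp [hU0]
    · have := natDegree_lt_natDegree hU0 (EuclideanDomain.mod_lt _ hB0)
      omega
  have hsum : U * A + V * B = C := by
    have hdiv := EuclideanDomain.mod_add_div (C * U₀) B
    linear_combination C * hUV + A * hdiv
  refine ⟨U, V, by omega, ?_, hsum⟩
  have hUA : (U * A).natDegree ≤ k := natDegree_mul_le.trans (by omega)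
  rcases eq_or_ne V 0 with hV0 | hV0
  · simp [hV0]
  · have hVB : (V * B).natDegree ≤ k := by
      rw [eq_sub_of_add_eq' hsum]
      exact (natDegree_sub_le _ _).trans (max_le hC hUA)
    rw [natDegree_mul hV0 hB0, hBdeg] at hVB
    omega

section Dehomogenization

variable {R : Type*} [CommRing R] {q : MvPolynomial (Fin 2) R} {n : ℕ}

local notation "dehom" => MvPolynomial.aeval (R := R) ![(Polynomial.X : R[X]), 1]

theorem MvPolynomial.IsHomogeneous.natDegree_aeval_X_one_le (hq : q.IsHomogeneous n) :
    (dehom q).natDegree ≤ n := by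
  rw [q.as_sum, map_sum]
  refine Polynomial.natDegree_sum_le_of_forall_le _ _ fun s hs => ?_
  have hs : s 0 + s 1 = n := by
    simpa [Finsupp.weight_apply, Finsupp.sum_fintype, Fin.sum_univ_two] using
      hq (mem_support_iff.mp hs)
  rw [aeval_monomial, Finsupp.prod_fintype _ _ fun i => pow_zero _]
  simp only [Fin.prod_univ_two, Matrix.cons_val_zero, Matrix.cons_val_one, one_pow, mul_one,
    Polynomial.algebraMap_eq]
  exact (natDegree_C_mul_X_pow_le _ _).trans (by omega)

theorem MvPolynomial.IsHomogeneous.homogenize_aeval_X_one (hq : q.IsHomogeneous n) :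
    (dehom q).homogenize n = q :=
  homogenize_eq_of_isHomogeneous hq rfl

theorem MvPolynomial.aeval_X_one_pderiv_zero (q : MvPolynomial (Fin 2) R) :
    dehom (pderiv 0 q) = derivative (dehom q) := by
  induction q using MvPolynomial.induction_on with
  | C a => simp
  | add p q hp hq => simp [hp, hq]
  | mul_X p i hp =>
    fin_cases i
    · simp [hp, Derivation.leibniz]
      ring
    · simp [hp, Derivation.leibniz]

theorem MvPolynomial.IsHomogeneous.aeval_X_one_pderiv_one (hq : q.IsHomogeneous n) :
    dehom (pderiv 1 q) = (n : R[X]) * dehom q - Polynomial.X * derivative (dehom q) := by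
  have euler := congrArg dehom hq.sum_X_mul_pderiv
  simp only [Fin.sum_univ_two, map_add, map_mul, map_natCast, aeval_X, aeval_X_one_pderiv_zero,
    Matrix.cons_val_zero, Matrix.cons_val_one, one_mul, nsmul_eq_mul] at euler
  rw [← euler]
  ring

theorem MvPolynomial.IsHomogeneous.X_one_sq_dvd (hq : q.IsHomogeneous n)
    (hdeg : (dehom q).natDegree ≤ n - 2) (hn : 2 ≤ n) : X 1 ^ 2 ∣ q := by
  have := homogenize_mul (dehom q) 1 hdeg (natDegree_one.trans_le (Nat.zero_le 2))
  rw [mul_one, Nat.sub_add_cancel hn, hq.homogenize_aeval_X_one, homogenize_one] at this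
  exact ⟨_, this.trans (mul_comm _ _)⟩

theorem MvPolynomial.IsHomogeneous.coeff_aeval_X_one_ne_zero_or [Nontrivial R]
    (hq : q.IsHomogeneous n) (hn : 2 ≤ n) (hsq : Squarefree q) :
    (dehom q).coeff n ≠ 0 ∨ (dehom q).coeff (n - 1) ≠ 0 := by
  by_contra! h
  have hdeg : (dehom q).natDegree ≤ n - 2 := by
    refine natDegree_le_iff_coeff_eq_zero.mpr fun j hj => ?_
    rcases lt_or_ge n j with hnj | hjn
    · exact coeff_eq_zero_of_natDegree_lt (hq.natDegree_aeval_X_one_le.trans_lt hnj)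
    · obtain rfl | rfl : j = n ∨ j = n - 1 := by omega
      exacts [h.1, h.2]
  have hunit := hsq (X 1) (by rw [← pow_two]; exact hq.X_one_sq_dvd hdeg hn)
  simpa using hunit.map (MvPolynomial.eval (0 : Fin 2 → R))

theorem MvPolynomial.IsHomogeneous.homogenize_dvd_of_dvd_aeval_X_one [IsDomain R]
    (hq : q.IsHomogeneous n) {p : R[X]} (hp : p ∣ dehom q) :
    p.homogenize p.natDegree ∣ q := by
  obtain ⟨r, hr⟩ := hp
  rcases eq_or_ne (dehom q) 0 with h0 | h0
  · rw [← hq.homogenize_aeval_X_one, h0, homogenize_zero]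
    exact dvd_zero _
  rw [hr] at h0
  have hdeg := hq.natDegree_aeval_X_one_le
  rw [hr, natDegree_mul (left_ne_zero_of_mul h0) (right_ne_zero_of_mul h0)] at hdeg
  have := homogenize_mul p r le_rfl (le_tsub_of_add_le_left hdeg)
  rw [← hr, Nat.add_sub_cancel' (le_of_add_le_left hdeg), hq.homogenize_aeval_X_one] at this
  exact ⟨_, this⟩

theorem MvPolynomial.IsHomogeneous.squarefree_aeval_X_one [IsDomain R]
    (hq : q.IsHomogeneous n) (hsq : Squarefree q) : Squarefree (dehom q) := by
  have hq0 : dehom q ≠ 0 := fun h =>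
    hsq.ne_zero (by rw [← hq.homogenize_aeval_X_one, h, homogenize_zero])
  intro p hp
  have hp0 : p ≠ 0 := by
    rintro rfl
    exact hq0 (zero_dvd_iff.mp (by simpa using hp))
  have := hq.homogenize_dvd_of_dvd_aeval_X_one hp
  rw [natDegree_mul hp0 hp0, homogenize_mul p p le_rfl le_rfl] at this
  simpa [aeval_homogenize_X_one] using (hsq _ this).map dehom

theorem MvPolynomial.IsHomogeneous.mem_span_pair_of_aeval_X_one {a b P : MvPolynomial (Fin 2) R}
    {m k : ℕ} (ha : a.IsHomogeneous m) (hb : b.IsHomogeneous m) (hP : P.IsHomogeneous k)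
    (hmk : m ≤ k) {U V : R[X]} (hU : U.natDegree ≤ k - m) (hV : V.natDegree ≤ k - m)
    (h : U * dehom a + V * dehom b = dehom P) : P ∈ Ideal.span {a, b} := by
  refine Ideal.mem_span_pair.mpr ⟨U.homogenize (k - m), V.homogenize (k - m), ?_⟩
  rw [← ha.homogenize_aeval_X_one, ← hb.homogenize_aeval_X_one,
    ← homogenize_mul _ _ hU ha.natDegree_aeval_X_one_le,
    ← homogenize_mul _ _ hV hb.natDegree_aeval_X_one_le, ← homogenize_add,
    Nat.sub_add_cancel hmk, h, hP.homogenize_aeval_X_one]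

end Dehomogenization

/-- If `f ∈ ℂ[X₀,X₁]` is homogeneous of degree `d ≥ 2` and squarefree, then every homogeneous
polynomial of degree `≥ 2d−3` lies in the Jacobian ideal `J_f`; i.e. `R_f^k = 0` for
`k ≥ 2d−3`. -/
theorem stmt5 (d : ℕ) (hd : 2 ≤ d) (f : MvPolynomial (Fin 2) ℂ)
    (hf : f.IsHomogeneous d) (hsf : Squarefree f) :
    ∀ k : ℕ, 2 * d - 3 ≤ k → ∀ P : MvPolynomial (Fin 2) ℂ,
      P.IsHomogeneous k → P ∈ jacIdeal f := by
  intro k hk P hP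
  have hcop : IsCoprime (aeval ![(X : ℂ[X]), 1] (pderiv 0 f))
      (aeval ![(X : ℂ[X]), 1] (pderiv 1 f)) := by
    rw [aeval_X_one_pderiv_zero, hf.aeval_X_one_pderiv_one]
    exact isCoprime_derivative_natCast_mul_sub_X_mul_derivative
      (hf.squarefree_aeval_X_one hsf) (by omega)
  have htop : (aeval ![(X : ℂ[X]), 1] (pderiv 0 f)).coeff (d - 1) ≠ 0 ∨
      (aeval ![(X : ℂ[X]), 1] (pderiv 1 f)).coeff (d - 1) ≠ 0 := by
    rw [aeval_X_one_pderiv_zero, hf.aeval_X_one_pderiv_one]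
    exact coeff_derivative_ne_zero_or (by omega) (hf.coeff_aeval_X_one_ne_zero_or hd hsf)
  obtain ⟨U, V, hU, hV, hUV⟩ := exists_mul_add_mul_eq_of_isCoprime hcop
    hf.pderiv.natDegree_aeval_X_one_le hf.pderiv.natDegree_aeval_X_one_le htop (by omega)
    hP.natDegree_aeval_X_one_le
  exact hf.pderiv.mem_span_pair_of_aeval_X_one hf.pderiv hP (by omega) hU hV hUV
end

section
/- Let f ∈ ℂ[X₀,X₁] be homogeneous of degree d ≥ 2 and squarefree. Then the ℂ-vector space R_f^{2d−4} = S^{2d−4}/(S^{2d−4} ∩ J_f) has dimension exactly 1; that is, there exists h ∈ S^{2d−4} with h ∉ J_f, and for any two h, h′ ∈ S^{2d−4} with h ∉ J_f there is a scalar c ∈ ℂ with h′ − c·h ∈ J_f. -/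
/-!
The partial derivatives `f₀, f₁` of `f` are forms of degree `d - 1` without common prime
factor `q`: by Euler's identity such a `q` divides `f`, say `f = q g`, and `q ∤ g` because `f` is
squarefree; then `q ∣ ∂ᵢf = ∂ᵢq g + q ∂ᵢg` gives `q ∣ ∂ᵢq`, so `∂ᵢq = 0` for degree reasons and
`q` is constant. Hence `(u, v) ↦ u f₀ + v f₁` is injective on pairs of forms of degree `d - 3`
(`f₁ ∣ u f₀` forces `f₁ ∣ u`, and `deg u < deg f₁`), and its image is the degree `2d - 4` part
of `J_f`. This part therefore has dimension `2(d - 2)`, one less than the space of binary forms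
of degree `2d - 4`. For `d = 2` it is zero, as `J_f` is generated in degree `1`.
-/

open MvPolynomial

open Module

namespace Submodule
variable {K M : Type*} [Field K] [AddCommGroup M] [Module K M] {V I : Submodule K M}

theorem exists_mem_notMem_of_finrank_inf_lt [FiniteDimensional K V]
    (h : finrank K ↥(I ⊓ V) < finrank K V) : ∃ x ∈ V, x ∉ I := by
  by_contra! hVI
  rw [inf_of_le_right hVI] at h
  exact h.false

theorem exists_sub_smul_mem_of_finrank_eq_finrank_inf_add_one [FiniteDimensional K V]
    (h : finrank K V = finrank K ↥(I ⊓ V) + 1) {x y : M} (hx : x ∈ V) (hy : y ∈ V)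
    (hxI : x ∉ I) : ∃ c : K, y - c • x ∈ I := by
  have hx0 : x ≠ 0 := by rintro rfl; exact hxI I.zero_mem
  have hdisj : Disjoint (I ⊓ V) (K ∙ x) := (disjoint_span_singleton' hx0).mpr fun h ↦ hxI h.1
  have hsup : (I ⊓ V) ⊔ (K ∙ x) = V := by
    refine eq_of_le_of_finrank_eq (sup_le inf_le_right ((span_singleton_le_iff_mem _ _).mpr hx)) ?_
    have := finrank_sup_add_finrank_inf_eq (I ⊓ V) (K ∙ x)
    rw [hdisj.eq_bot, finrank_bot, finrank_span_singleton hx0] at this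
    omega
  obtain ⟨w, hw, z, hz, rfl⟩ := mem_sup.mp (hsup ▸ hy)
  obtain ⟨c, rfl⟩ := mem_span_singleton.mp hz
  exact ⟨c, by simpa using hw.1⟩

end Submodule

namespace MvPolynomial
variable {σ R K : Type*}

section CommSemiring
variable [CommSemiring R] {g : MvPolynomial σ R} {m n : ℕ}

attribute [local instance] gradedAlgebra in
theorem homogeneousComponent_add_mul_of_isHomogeneous (hg : g.IsHomogeneous m) (a) (n) :
    homogeneousComponent (n + m) (a * g) = homogeneousComponent n a * g := by
  simp only [← decomposition.decompose'_apply]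
  exact DirectSum.coe_decompose_mul_add_of_right_mem _ (mem_homogeneousSubmodule m g |>.mpr hg)

attribute [local instance] gradedAlgebra in
theorem homogeneousComponent_mul_eq_zero_of_lt (hg : g.IsHomogeneous m) (a) (h : n < m) :
    homogeneousComponent n (a * g) = 0 := by
  rw [← decomposition.decompose'_apply]
  exact DirectSum.coe_decompose_mul_of_right_mem_of_not_le _
    (mem_homogeneousSubmodule m g |>.mpr hg) (not_le.mpr h)

theorem totalDegree_pderiv_lt {p : MvPolynomial σ R} {i : σ} (h : pderiv i p ≠ 0) :
    (pderiv i p).totalDegree < p.totalDegree := by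
  classical
  obtain ⟨s, hs, hmax⟩ := Finset.exists_mem_eq_sup _ (support_nonempty.mpr h)
    fun s ↦ s.sum fun _ e ↦ e
  have hcoeff : coeff (s + Finsupp.single i 1) p ≠ 0 := by
    intro h0
    rw [mem_support_iff, coeff_pderiv, h0, zero_mul] at hs
    exact hs rfl
  have := le_totalDegree (mem_support_iff.mpr hcoeff)
  rw [Finsupp.sum_add_index' (fun _ ↦ rfl) fun _ _ _ ↦ rfl, Finsupp.sum_single_index rfl] at this
  rw [totalDegree, hmax]
  omega

end CommSemiring

section CommRing
variable [CommRing R] [IsDomain R] {g u p : MvPolynomial σ R} {m n : ℕ}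

theorem eq_zero_of_dvd_of_isHomogeneous (hg : g.IsHomogeneous m) (hu : u.IsHomogeneous n)
    (hnm : n < m) (h : g ∣ u) : u = 0 := by
  by_contra hu0
  have hg0 : g ≠ 0 := by rintro rfl; exact hu0 (zero_dvd_iff.mp h)
  have := totalDegree_le_of_dvd_of_isDomain h hu0
  rw [hg.totalDegree hg0] at this
  exact absurd (this.trans hu.totalDegree_le) hnm.not_ge

theorem pderiv_eq_zero_of_dvd {i : σ} (h : p ∣ pderiv i p) : pderiv i p = 0 := by
  by_contra h0
  exact (totalDegree_le_of_dvd_of_isDomain h h0).not_gt (totalDegree_pderiv_lt h0)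

theorem eq_C_of_forall_pderiv_eq_zero [CharZero R] (h : ∀ i, pderiv i p = 0) :
    p = C (coeff 0 p) := by
  classical
  ext m
  rw [coeff_C]
  split_ifs with hm
  · rw [hm]
  obtain ⟨i, hi⟩ : ∃ i, m i ≠ 0 := by
    by_contra! h0; exact hm (Finsupp.ext fun i ↦ (h0 i).symm)
  have hsplit : m - Finsupp.single i 1 + Finsupp.single i 1 = m :=
    tsub_add_cancel_of_le (Finsupp.single_le_iff.mpr (Nat.one_le_iff_ne_zero.mpr hi))
  have := coeff_pderiv (i := i) p (m - Finsupp.single i 1)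
  rw [h i, coeff_zero, hsplit, eq_comm, mul_eq_zero] at this
  exact this.resolve_right (Nat.cast_add_one_ne_zero _)

end CommRing

section Field
variable [Field K] [CharZero K] {f c q : MvPolynomial σ K} {d : ℕ}

theorem dvd_of_forall_dvd_pderiv [Fintype σ] (hf : f.IsHomogeneous d) (hd : d ≠ 0)
    (h : ∀ i, c ∣ pderiv i f) : c ∣ f := by
  have hdf : c ∣ (d : K) • f := by
    rw [Nat.cast_smul_eq_nsmul, ← hf.sum_X_mul_pderiv]
    exact Finset.dvd_sum fun i _ ↦ (h i).mul_left _
  rw [← inv_smul_smul₀ (Nat.cast_ne_zero.mpr hd : (d : K) ≠ 0) f, smul_eq_C_mul]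
  exact hdf.mul_left _

theorem not_prime_of_forall_dvd_pderiv [Fintype σ] (hf : f.IsHomogeneous d) (hd : d ≠ 0)
    (hsf : Squarefree f) (h : ∀ i, q ∣ pderiv i f) : ¬Prime q := by
  intro hq
  obtain ⟨g, hfg⟩ := dvd_of_forall_dvd_pderiv hf hd h
  have hqg : ¬q ∣ g := fun ⟨g', hg'⟩ ↦ hq.not_isUnit (hsf q ⟨g', by rw [hfg, hg', mul_assoc]⟩)
  have hdq (i : σ) : pderiv i q = 0 := by
    apply pderiv_eq_zero_of_dvd
    have hi : q ∣ pderiv i q * g + q * pderiv i g := by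
      rw [← pderiv_mul, ← hfg]; exact h i
    exact (hq.dvd_or_dvd ((dvd_add_left (dvd_mul_right q _)).mp hi)).resolve_right hqg
  have hC := eq_C_of_forall_pderiv_eq_zero hdq
  by_cases hc : coeff 0 q = 0
  · exact hq.ne_zero (by rw [hC, hc, map_zero])
  · exact hq.not_isUnit (hC ▸ (isUnit_iff_ne_zero.mpr hc).map C)

theorem isRelPrime_pderiv_of_squarefree {f : MvPolynomial (Fin 2) K} (hf : f.IsHomogeneous d)
    (hd : d ≠ 0) (hsf : Squarefree f) : IsRelPrime (pderiv 0 f) (pderiv 1 f) := by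
  have hall {c} (h₀ : c ∣ pderiv 0 f) (h₁ : c ∣ pderiv 1 f) (i : Fin 2) : c ∣ pderiv i f := by
    fin_cases i <;> assumption
  refine WfDvdMonoid.isRelPrime_of_no_irreducible_factors ?_ fun q hq h₀ h₁ ↦ ?_
  · rintro ⟨h₀, h₁⟩
    exact hsf.ne_zero <| zero_dvd_iff.mp <|
      dvd_of_forall_dvd_pderiv hf hd (hall (zero_dvd_iff.mpr h₀) (zero_dvd_iff.mpr h₁))
  · exact not_prime_of_forall_dvd_pderiv hf hd hsf (hall h₀ h₁) hq.prime

end Field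

section SpanPair
variable [CommRing R] (g₀ g₁ : MvPolynomial σ R) (n : ℕ)

noncomputable def pairCombination :
    homogeneousSubmodule σ R n × homogeneousSubmodule σ R n →ₗ[R] MvPolynomial σ R :=
  (LinearMap.mulRight R g₀ ∘ₗ (homogeneousSubmodule σ R n).subtype).coprod
    (LinearMap.mulRight R g₁ ∘ₗ (homogeneousSubmodule σ R n).subtype)

@[simp]
theorem pairCombination_apply (uv : homogeneousSubmodule σ R n × homogeneousSubmodule σ R n) :
    pairCombination g₀ g₁ n uv = uv.1 * g₀ + uv.2 * g₁ := rfl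

variable {g₀ g₁ n} {m : ℕ}

theorem span_pair_inf_homogeneousSubmodule (hg₀ : g₀.IsHomogeneous m)
    (hg₁ : g₁.IsHomogeneous m) :
    (Ideal.span {g₀, g₁}).restrictScalars R ⊓ homogeneousSubmodule σ R (n + m) =
      LinearMap.range (pairCombination g₀ g₁ n) := by
  apply le_antisymm
  · rintro h ⟨hJ, hh⟩
    obtain ⟨a, b, rfl⟩ := Ideal.mem_span_pair.mp hJ
    refine ⟨(⟨_, homogeneousComponent_mem n a⟩, ⟨_, homogeneousComponent_mem n b⟩), ?_⟩
    rw [pairCombination_apply, ← homogeneousComponent_add_mul_of_isHomogeneous hg₀,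
      ← homogeneousComponent_add_mul_of_isHomogeneous hg₁, ← map_add]
    exact homogeneousComponent_of_mem hh |>.trans (if_pos rfl)
  · rintro _ ⟨⟨⟨u, hu⟩, ⟨v, hv⟩⟩, rfl⟩
    exact ⟨Ideal.mem_span_pair.mpr ⟨u, v, rfl⟩, (hu.mul hg₀).add (hv.mul hg₁)⟩

theorem span_pair_inf_homogeneousSubmodule_of_lt (hg₀ : g₀.IsHomogeneous m)
    (hg₁ : g₁.IsHomogeneous m) (h : n < m) :
    (Ideal.span {g₀, g₁}).restrictScalars R ⊓ homogeneousSubmodule σ R n = ⊥ := by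
  refine eq_bot_iff.mpr fun p ⟨hJ, hp⟩ ↦ ?_
  obtain ⟨a, b, rfl⟩ := Ideal.mem_span_pair.mp hJ
  rw [Submodule.mem_bot, ← homogeneousComponent_of_mem hp |>.trans (if_pos rfl), map_add,
    homogeneousComponent_mul_eq_zero_of_lt hg₀ a h, homogeneousComponent_mul_eq_zero_of_lt hg₁ b h,
    add_zero]

theorem pairCombination_injective [IsDomain R] [DecompositionMonoid (MvPolynomial σ R)]
    (hg₀ : g₀.IsHomogeneous m) (hg₁ : g₁.IsHomogeneous m) (hrel : IsRelPrime g₀ g₁) (h : n < m) :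
    Function.Injective (pairCombination g₀ g₁ n) := by
  rw [← LinearMap.ker_eq_bot, LinearMap.ker_eq_bot']
  rintro ⟨⟨u, hu⟩, ⟨v, hv⟩⟩ huv
  replace huv : u * g₀ + v * g₁ = 0 := huv
  have hu0 : u = 0 := eq_zero_of_dvd_of_isHomogeneous hg₁ hu h <|
    hrel.symm.dvd_of_dvd_mul_right ⟨-v, by linear_combination huv⟩
  have hv0 : v = 0 := eq_zero_of_dvd_of_isHomogeneous hg₀ hv h <|
    hrel.dvd_of_dvd_mul_right ⟨-u, by linear_combination huv⟩
  simp [hu0, hv0]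

end SpanPair

instance [CommRing R] [Finite σ] (n : ℕ) : Module.Finite R (homogeneousSubmodule σ R n) :=
  Module.Finite.of_fg (homogeneousSubmodule_fg σ R n)

theorem finrank_homogeneousSubmodule [Fintype σ] [Field K] (n : ℕ) :
    finrank K (homogeneousSubmodule σ K n) = (Fintype.card σ + n - 1).choose n := by
  classical
  have hset : {d : σ →₀ ℕ | d.degree = n} =
      ((Finset.univ : Finset σ).finsuppAntidiag n : Set (σ →₀ ℕ)) := by
    ext d; simp [Finsupp.degree_eq_sum]
  rw [homogeneousSubmodule_eq_finsupp_supported, hset,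
    (AddMonoidAlgebra.supportedEquivFinsupp _).finrank_eq, finrank_finsupp_self]
  simp [Finset.card_finsuppAntidiag_nat_eq_choose]

theorem finrank_homogeneousSubmodule_fin_two [Field K] (n : ℕ) :
    finrank K (homogeneousSubmodule (Fin 2) K n) = n + 1 := by
  rw [finrank_homogeneousSubmodule, Fintype.card_fin, show 2 + n - 1 = n + 1 by omega,
    Nat.choose_succ_self_right]

theorem finrank_span_pair_inf_homogeneousSubmodule [Field K] [Finite σ] {g₀ g₁ : MvPolynomial σ K}
    {m n : ℕ} (hg₀ : g₀.IsHomogeneous m) (hg₁ : g₁.IsHomogeneous m) (hrel : IsRelPrime g₀ g₁)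
    (h : n < m) :
    finrank K ↥((Ideal.span {g₀, g₁}).restrictScalars K ⊓ homogeneousSubmodule σ K (n + m)) =
      2 * finrank K (homogeneousSubmodule σ K n) := by
  rw [span_pair_inf_homogeneousSubmodule hg₀ hg₁,
    LinearMap.finrank_range_of_inj (pairCombination_injective hg₀ hg₁ hrel h),
    finrank_prod, two_mul]

end MvPolynomial

theorem finrank_homogeneousSubmodule_eq_finrank_jacIdeal_inf_add_one {d : ℕ} (hd : 2 ≤ d)
    {f : MvPolynomial (Fin 2) ℂ} (hf : f.IsHomogeneous d) (hsf : Squarefree f) :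
    finrank ℂ (homogeneousSubmodule (Fin 2) ℂ (2 * d - 4)) =
      finrank ℂ ↥((jacIdeal f).restrictScalars ℂ ⊓ homogeneousSubmodule (Fin 2) ℂ (2 * d - 4)) +
        1 := by
  have hf' (i : Fin 2) : (pderiv i f).IsHomogeneous (d - 1) := hf.pderiv
  rw [jacIdeal, finrank_homogeneousSubmodule_fin_two]
  obtain ⟨_ | e, rfl⟩ := Nat.exists_eq_add_of_le' hd
  · rw [span_pair_inf_homogeneousSubmodule_of_lt (hf' 0) (hf' 1) (by omega), finrank_bot]
  · have hrel := isRelPrime_pderiv_of_squarefree hf (by omega) hsf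
    rw [show 2 * (e + 1 + 2) - 4 = e + (e + 1 + 2 - 1) by omega,
      finrank_span_pair_inf_homogeneousSubmodule (hf' 0) (hf' 1) hrel (by omega),
      finrank_homogeneousSubmodule_fin_two]
    omega

/-- If `f ∈ ℂ[X₀,X₁]` is homogeneous of degree `d ≥ 2` and squarefree, then
`R_f^{2d−4} = S^{2d−4}/(S^{2d−4} ∩ J_f)` is one-dimensional: there is an `h ∈ S^{2d−4}` with
`h ∉ J_f`, and for any `h, h′ ∈ S^{2d−4}` with `h ∉ J_f` there is `c ∈ ℂ` with
`h′ − c·h ∈ J_f`. -/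
theorem stmt6 (d : ℕ) (hd : 2 ≤ d) (f : MvPolynomial (Fin 2) ℂ)
    (hf : f.IsHomogeneous d) (hsf : Squarefree f) :
    (∃ h : MvPolynomial (Fin 2) ℂ, h.IsHomogeneous (2 * d - 4) ∧ h ∉ jacIdeal f) ∧
      ∀ h h' : MvPolynomial (Fin 2) ℂ, h.IsHomogeneous (2 * d - 4) →
        h'.IsHomogeneous (2 * d - 4) → h ∉ jacIdeal f →
          ∃ c : ℂ, h' - c • h ∈ jacIdeal f := by
  have hdim := finrank_homogeneousSubmodule_eq_finrank_jacIdeal_inf_add_one hd hf hsf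
  exact ⟨Submodule.exists_mem_notMem_of_finrank_inf_lt (Nat.lt_of_add_one_le hdim.ge),
    fun h h' hh hh' hJ ↦
      Submodule.exists_sub_smul_mem_of_finrank_eq_finrank_inf_add_one hdim hh hh' hJ⟩
end
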